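/- Let x_1,…,x_V ∈ ℝ^d, let e : ℝ^d → (0,1], let h ∈ (0,1], and let p ≤ 1/(V−1). For b ∈ {0,1}^{V−1}, let P_b be the probability distribution of (X,S) on {x_1,…,x_V} × {0,1} defined by: P_b(X = x_i) = p for 1 ≤ i ≤ V−1 and P_b(X = x_V) = 1 − p·(V−1); P_b(Y = 1 | X = x_i) = (1 + (2·b_i − 1)·h)/2 for 1 ≤ i ≤ V−1 and Y = 0 almost surely at x_V; and P_b(S = 1 | X = x_i, Y = y) = y·e(x_i). If b and b' differ in exactly one coordinate i ∈ {1,…,V−1}, then the squared Hellinger distance satisfies H²(P_b, P_{b'}) ≤ 2·p·e(x_i)·h². -/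

import Mathlib

/-!
Only the two cells `(x_i, S = 1)` and `(x_i, S = 0)` differ between `P_b` and `P_{b'}`, and
there the regression value `θ = (1 ± h)/2` is swapped for `1 - θ`. Each cell changes its mass by
`p·e(x_i)·h`, while the larger of its two masses is at least `p·e(x_i)/2`, resp. `p/2`; since
`(√a - √b)² = (a - b)² / (√a + √b)² ≤ (a - b)² / max a b`, each cell contributes at most
`2·p·e(x_i)·h²`.
-/

open Real

noncomputable section

/-- The discrete joint distribution `P_b` of `(X, S)` on `{x_1, …, x_{m+1}} × {0,1}`
(points indexed by `Fin (m+1)`, label `S` by `Bool`), built from the marginal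
`P(X = x_i) = p` for `i ≤ m`, `P(X = x_{m+1}) = 1 − p·m`, the regression values
`P(Y = 1 ∣ X = x_i) = (1 + (2·b_i − 1)·h)/2` for `i ≤ m` (and `Y = 0` at `x_{m+1}`),
and the propensity `P(S = 1 ∣ X = x_i, Y = y) = y·e(x_i)`; here `m = V − 1`. -/
def PbPU {dim m : ℕ} (x : Fin (m + 1) → (Fin dim → ℝ)) (e : (Fin dim → ℝ) → ℝ)
    (p h : ℝ) (b : Fin m → ℝ) : Fin (m + 1) × Bool → ℝ :=
  fun q =>
    if hi : (q.1 : ℕ) < m then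
      if q.2 then p * (e (x q.1) * ((1 + (2 * b ⟨q.1, hi⟩ - 1) * h) / 2))
      else p * (1 - e (x q.1) * ((1 + (2 * b ⟨q.1, hi⟩ - 1) * h) / 2))
    else
      if q.2 then 0 else 1 - p * m

lemma sqrt_sub_sqrt_sq_le {a b w : ℝ} (ha : 0 ≤ a) (hb : 0 ≤ b) (hw₀ : 0 < w)
    (hw : w ≤ max a b) : (√a - √b) ^ 2 ≤ (a - b) ^ 2 / w := by
  rw [le_div_iff₀ hw₀]
  have hmax : max a b ≤ (√a + √b) ^ 2 := by
    have := sqrt_nonneg a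
    have := sqrt_nonneg b
    rcases le_total a b with hab | hab
    · rw [max_eq_right hab]; nlinarith [sq_sqrt hb]
    · rw [max_eq_left hab]; nlinarith [sq_sqrt ha]
  calc (√a - √b) ^ 2 * w ≤ (√a - √b) ^ 2 * (√a + √b) ^ 2 :=
        mul_le_mul_of_nonneg_left (hw.trans hmax) (sq_nonneg _)
    _ = (a - b) ^ 2 := by
        rw [← mul_pow, mul_comm, ← sq_sub_sq, sq_sqrt ha, sq_sqrt hb]

lemma sqrt_cells_flip_sq_le {p E θ : ℝ} (hp : 0 < p) (hE₀ : 0 < E) (hE₁ : E ≤ 1)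
    (hθ₀ : 0 ≤ θ) (hθ₁ : θ ≤ 1) :
    (√(p * (E * θ)) - √(p * (E * (1 - θ)))) ^ 2
      + (√(p * (1 - E * θ)) - √(p * (1 - E * (1 - θ)))) ^ 2
      ≤ 4 * p * E * (2 * θ - 1) ^ 2 := by
  have hpE : 0 < p * E := mul_pos hp hE₀
  have hEθ : E * θ ≤ 1 := by nlinarith
  have hEθ' : E * (1 - θ) ≤ 1 := by nlinarith
  have hlabelled : (√(p * (E * θ)) - √(p * (E * (1 - θ)))) ^ 2
      ≤ 2 * p * E * (2 * θ - 1) ^ 2 := by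
    refine (sqrt_sub_sqrt_sq_le (w := p * E / 2) (by positivity) (by nlinarith)
      (by positivity) ?_).trans_eq (by field_simp; ring)
    rcases le_total θ (1 / 2) with hθ | hθ
    · exact le_max_of_le_right (by nlinarith)
    · exact le_max_of_le_left (by nlinarith)
  have hunlabelled : (√(p * (1 - E * θ)) - √(p * (1 - E * (1 - θ)))) ^ 2
      ≤ 2 * p * E ^ 2 * (2 * θ - 1) ^ 2 := by
    refine (sqrt_sub_sqrt_sq_le (w := p / 2) (by nlinarith) (by nlinarith)
      (by positivity) ?_).trans_eq (by field_simp; ring)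
    rcases le_total θ (1 / 2) with hθ | hθ
    · exact le_max_of_le_left (by nlinarith)
    · exact le_max_of_le_right (by nlinarith)
  have hE_sq : 2 * p * E ^ 2 * (2 * θ - 1) ^ 2 ≤ 2 * p * E * (2 * θ - 1) ^ 2 := by
    have : E ^ 2 ≤ E := by nlinarith
    gcongr
  linarith

lemma regression_mem_Icc {h β : ℝ} (hh : |h| ≤ 1) (hβ : β = 0 ∨ β = 1) :
    (1 + (2 * β - 1) * h) / 2 ∈ Set.Icc 0 1 := by
  obtain ⟨hh₀, hh₁⟩ := abs_le.1 hh
  rcases hβ with rfl | rfl <;> constructor <;> linarith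

lemma two_mul_regression_sub_one_sq {h β : ℝ} (hβ : β = 0 ∨ β = 1) :
    (2 * ((1 + (2 * β - 1) * h) / 2) - 1) ^ 2 = h ^ 2 := by
  rcases hβ with rfl | rfl <;> ring

section PbPU

variable {dim m : ℕ} (x : Fin (m + 1) → (Fin dim → ℝ)) (e : (Fin dim → ℝ) → ℝ) (p h : ℝ)

lemma PbPU_castSucc_true (b : Fin m → ℝ) (i : Fin m) :
    PbPU x e p h b (i.castSucc, true) = p * (e (x i.castSucc) * ((1 + (2 * b i - 1) * h) / 2)) := by
  simp [PbPU]

lemma PbPU_castSucc_false (b : Fin m → ℝ) (i : Fin m) :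
    PbPU x e p h b (i.castSucc, false)
      = p * (1 - e (x i.castSucc) * ((1 + (2 * b i - 1) * h) / 2)) := by
  simp [PbPU]

lemma PbPU_eq_of_fst_ne {b b' : Fin m → ℝ} {i : Fin m} (hij : ∀ j, j ≠ i → b j = b' j)
    {q : Fin (m + 1) × Bool} (hq : q.1 ≠ i.castSucc) :
    PbPU x e p h b q = PbPU x e p h b' q := by
  unfold PbPU
  by_cases hlt : (q.1 : ℕ) < m
  · have hne : (⟨q.1, hlt⟩ : Fin m) ≠ i := fun hqi => hq (Fin.ext (by simp [← hqi]))
    simp only [dif_pos hlt, hij _ hne]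
  · simp only [dif_neg hlt]

lemma sum_sqrt_PbPU_sub_sq_eq {b b' : Fin m → ℝ} {i : Fin m} (hij : ∀ j, j ≠ i → b j = b' j) :
    ∑ q : Fin (m + 1) × Bool, (√(PbPU x e p h b q) - √(PbPU x e p h b' q)) ^ 2
      = ∑ s : Bool,
          (√(PbPU x e p h b (i.castSucc, s)) - √(PbPU x e p h b' (i.castSucc, s))) ^ 2 := by
  rw [Fintype.sum_prod_type, Fintype.sum_eq_single i.castSucc]
  intro a ha
  simp [PbPU_eq_of_fst_ne x e p h hij (q := (a, _)) ha]

end PbPU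

theorem hellinger_sq_le_general
    (dim m : ℕ)
    (x : Fin (m + 1) → (Fin dim → ℝ)) (e : (Fin dim → ℝ) → ℝ)
    (p h : ℝ) (b b' : Fin m → ℝ)
    (he : ∀ z, 0 < e z ∧ e z ≤ 1)
    (hh0 : 0 < h) (hh1 : h ≤ 1)
    (hp0 : 0 < p)
    (hb : ∀ j, b j = 0 ∨ b j = 1) (hb' : ∀ j, b' j = 0 ∨ b' j = 1)
    (i : Fin m) (hi : b i ≠ b' i) (hij : ∀ j, j ≠ i → b j = b' j) :
    (1 / 2 : ℝ) * ∑ q : Fin (m + 1) × Bool,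
        (Real.sqrt (PbPU x e p h b q) - Real.sqrt (PbPU x e p h b' q)) ^ 2 ≤
      2 * p * e (x i.castSucc) * h ^ 2 := by
  obtain ⟨hE₀, hE₁⟩ := he (x i.castSucc)
  have hflip : b' i = 1 - b i := by
    rcases hb i with hbi | hbi <;> rcases hb' i with hbi' | hbi' <;> simp_all
  have hθ' : (1 + (2 * b' i - 1) * h) / 2 = 1 - (1 + (2 * b i - 1) * h) / 2 := by
    rw [hflip]; ring
  obtain ⟨hθ₀, hθ₁⟩ := regression_mem_Icc (abs_le.2 ⟨by linarith, hh1⟩) (hb i)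
  have hcells := sqrt_cells_flip_sq_le hp0 hE₀ hE₁ hθ₀ hθ₁
  rw [two_mul_regression_sub_one_sq (hb i)] at hcells
  rw [sum_sqrt_PbPU_sub_sq_eq x e p h hij, Fintype.sum_bool, PbPU_castSucc_true,
    PbPU_castSucc_true, PbPU_castSucc_false, PbPU_castSucc_false, hθ']
  linarith

/-- **Lemma 2 (technical): Hellinger distance bound.** If `b` and `b'` are binary vectors
differing exactly at coordinate `i`, then the squared Hellinger distance between `P_b`
and `P_{b'}` satisfies `H²(P_b, P_{b'}) ≤ 2·p·e(x_i)·h²`. -/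
theorem hellinger_sq_le
    (dim m : ℕ) (hm : 1 ≤ m)
    (x : Fin (m + 1) → (Fin dim → ℝ)) (e : (Fin dim → ℝ) → ℝ)
    (p h : ℝ) (b b' : Fin m → ℝ)
    (he : ∀ z, 0 < e z ∧ e z ≤ 1)
    (hh0 : 0 < h) (hh1 : h ≤ 1)
    (hp0 : 0 < p) (hp : p ≤ 1 / (m : ℝ))
    (hb : ∀ j, b j = 0 ∨ b j = 1) (hb' : ∀ j, b' j = 0 ∨ b' j = 1)
    (i : Fin m) (hi : b i ≠ b' i) (hij : ∀ j, j ≠ i → b j = b' j) :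
    (1 / 2 : ℝ) * ∑ q : Fin (m + 1) × Bool,
        (Real.sqrt (PbPU x e p h b q) - Real.sqrt (PbPU x e p h b' q)) ^ 2 ≤
      2 * p * e (x i.castSucc) * h ^ 2 :=
  hellinger_sq_le_general dim m x e p h b b' he hh0 hh1 hp0 hb hb' i hi hij
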